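/- arXiv:2111.15123 — 4 statements merged into one kernel-verified Lean document; each statement's English description precedes it below -/
import Mathlib

section
/- For τ > 0 and ρ > 0, the cubic equation g³ + 2g² + (1 + ρτ − ρ)g − ρ = 0 has exactly one positive real root g satisfying 1 + (1−τ)g > 0. -/
/-- For τ > 0 and ρ > 0, the cubic equation g³ + 2g² + (1 + ρτ − ρ)g − ρ = 0 has
exactly one positive real root g satisfying 1 + (1−τ)g > 0. -/
theorem stmt_0 (τ ρ : ℝ) (hτ : 0 < τ) (hρ : 0 < ρ) :
    ∃! g : ℝ, 0 < g ∧ g ^ 3 + 2 * g ^ 2 + (1 + ρ * τ - ρ) * g - ρ = 0 ∧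
      0 < 1 + (1 - τ) * g := by
  set f : ℝ → ℝ := fun g => g ^ 3 + 2 * g ^ 2 + (1 + ρ * τ - ρ) * g - ρ with hfdef
  have hcont : Continuous f := by
    unfold f; continuity
  have hf0 : f 0 = -ρ := by simp [hfdef]
  -- existence
  have hex : ∃ g : ℝ, 0 < g ∧ f g = 0 ∧ 0 < 1 + (1 - τ) * g := by
    by_cases h1 : τ ≤ 1
    · -- endpoint B = ρ + 1
      set B : ℝ := ρ + 1 with hB
      have hB0 : (0:ℝ) ≤ B := by positivity
      have hfB : 0 < f B := by
        simp only [hfdef]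
        nlinarith [sq_nonneg ρ, mul_pos (mul_pos hρ hτ) (by positivity : (0:ℝ) < B)]
      have := intermediate_value_Icc hB0 hcont.continuousOn
      have h0mem : (0:ℝ) ∈ Set.Icc (f 0) (f B) := by
        constructor <;> [linarith [hf0]; linarith]
      obtain ⟨g, hgmem, hgeq⟩ := this h0mem
      have hg0 : 0 < g := by
        rcases lt_or_eq_of_le hgmem.1 with h | h
        · exact h
        · exfalso; rw [← h] at hgeq; rw [hf0] at hgeq; linarith
      exact ⟨g, hg0, hgeq, by nlinarith [hgmem.1]⟩
    · push_neg at h1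
      set c : ℝ := 1 / (τ - 1) with hc
      have hτ1 : 0 < τ - 1 := by linarith
      have hc0 : 0 < c := by positivity
      have hce : (τ - 1) * c = 1 := by rw [hc]; field_simp
      have hfc : 0 < f c := by
        simp only [hfdef]
        nlinarith [hc0, hce, sq_nonneg c]
      have := intermediate_value_Icc hc0.le hcont.continuousOn
      have h0mem : (0:ℝ) ∈ Set.Icc (f 0) (f c) := by
        constructor <;> [linarith [hf0]; linarith]
      obtain ⟨g, hgmem, hgeq⟩ := this h0mem
      have hg0 : 0 < g := by
        rcases lt_or_eq_of_le hgmem.1 with h | h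
        · exact h
        · exfalso; rw [← h] at hgeq; rw [hf0] at hgeq; linarith
      have hgc : g < c := by
        rcases lt_or_eq_of_le hgmem.2 with h | h
        · exact h
        · exfalso; rw [h] at hgeq; linarith
      refine ⟨g, hg0, hgeq, ?_⟩
      nlinarith [hce, hgc, hτ1]
  obtain ⟨g, hg0, hgeq, hgc⟩ := hex
  refine ⟨g, ⟨hg0, hgeq, hgc⟩, ?_⟩
  rintro g' ⟨hg'0, hg'eq, hg'c⟩
  -- uniqueness
  have hK : 0 < 1 + 2 * (g' + g) + g' ^ 2 + g' * g + g ^ 2 +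
      (1 - τ) * (g' * g) * (2 + g' + g) := by
    nlinarith [mul_pos hg'c hg0, mul_pos hgc hg'0,
      mul_pos (mul_pos hg'c hg0) hg0, mul_pos (mul_pos hgc hg'0) hg'0,
      mul_pos hg'0 hg0]
  have key : (g' - g) * (1 + 2 * (g' + g) + g' ^ 2 + g' * g + g ^ 2 +
      (1 - τ) * (g' * g) * (2 + g' + g)) = 0 := by
    have h1 : g' ^ 3 + 2 * g' ^ 2 + (1 + ρ * τ - ρ) * g' - ρ = 0 := hg'eq
    have h2 : g ^ 3 + 2 * g ^ 2 + (1 + ρ * τ - ρ) * g - ρ = 0 := hgeq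
    linear_combination (1 + (1 - τ) * g) * h1 - (1 + (1 - τ) * g') * h2
  have := mul_eq_zero.mp key
  rcases this with h | h
  · linarith
  · exact absurd h (ne_of_gt hK)
end

section
/- Let z > 0, τ > 0 and let g > 0 satisfy g³ + 2g² + (1 + τ/z − 1/z)g − 1/z = 0, and set ḡ = 1/(1+g). Then −log((1+g)² − τg² − τg²ḡ² − g²(1−τg²ḡ²)) − log(ḡ²) = log((1+g)²/z⁻¹) − log(1/z⁻¹·(1 + 2zg³ + 2zg²))·1, i.e., equals log(ρ(1+g)²) − log(ρ + 2g³ + 2g²) with ρ = 1/z. -/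
/-!
The cubic says exactly that `τ g = 1 + g - z g (1 + g)²`. Substituting this for `τ` collapses the
argument of the first logarithm to `1 + 2 z g³ + 2 z g² = z (1/z + 2 g³ + 2 g²)`, and the claim
is then the arithmetic of `log` on products, inverses and squares.
-/

open Real

lemma tau_mul_eq_of_cubic {z τ g : ℝ} (hz : z ≠ 0)
    (hcubic : g ^ 3 + 2 * g ^ 2 + (1 + τ / z - 1 / z) * g - 1 / z = 0) :
    τ * g = 1 + g - z * g * (1 + g) ^ 2 := by
  field_simp at hcubic
  linear_combination hcubic

lemma log_arg_eq_of_tau_mul_eq {z τ g : ℝ} (hg : g ≠ 0) (h1g : 1 + g ≠ 0)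
    (hτg : τ * g = 1 + g - z * g * (1 + g) ^ 2) :
    (1 + g) ^ 2 - τ * g ^ 2 - τ * g ^ 2 * (1 / (1 + g)) ^ 2
        - g ^ 2 * (1 - τ * g ^ 2 * (1 / (1 + g)) ^ 2)
      = 1 + 2 * z * g ^ 3 + 2 * z * g ^ 2 := by
  obtain rfl : τ = (1 + g - z * g * (1 + g) ^ 2) / g := by
    rw [eq_div_iff hg, hτg]
  field_simp
  ring

lemma neg_log_mul_sub_log_one_div_sq {z c x : ℝ} (hz : z ≠ 0) (hc : c ≠ 0) (hx : x ≠ 0) :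
    -log (z * x) - log ((1 / c) ^ 2) = log (1 / z * c ^ 2) - log x := by
  rw [log_mul hz hx, log_mul (one_div_ne_zero hz) (pow_ne_zero 2 hc), one_div, one_div,
    log_inv, inv_pow, log_inv]
  ring

theorem stmt_5_general (z τ g : ℝ) (hz : 0 < z) (hg : 0 < g)
    (hcubic : g ^ 3 + 2 * g ^ 2 + (1 + τ / z - 1 / z) * g - 1 / z = 0) :
    -Real.log ((1 + g) ^ 2 - τ * g ^ 2 - τ * g ^ 2 * (1 / (1 + g)) ^ 2
        - g ^ 2 * (1 - τ * g ^ 2 * (1 / (1 + g)) ^ 2))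
      - Real.log ((1 / (1 + g)) ^ 2) =
    Real.log ((1 / z) * (1 + g) ^ 2) - Real.log (1 / z + 2 * g ^ 3 + 2 * g ^ 2) := by
  have h1g : 1 + g ≠ 0 := by positivity
  rw [log_arg_eq_of_tau_mul_eq hg.ne' h1g (tau_mul_eq_of_cubic hz.ne' hcubic),
    show 1 + 2 * z * g ^ 3 + 2 * z * g ^ 2 = z * (1 / z + 2 * g ^ 3 + 2 * g ^ 2) by
      field_simp]
  exact neg_log_mul_sub_log_one_div_sq hz.ne' h1g (by positivity)

/-- Let z > 0, τ > 0 and let g > 0 satisfy g³ + 2g² + (1 + τ/z − 1/z)g − 1/z = 0,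
and set ḡ = 1/(1+g). Then
−log((1+g)² − τg² − τg²ḡ² − g²(1−τg²ḡ²)) − log(ḡ²) = log(ρ(1+g)²) − log(ρ + 2g³ + 2g²)
with ρ = 1/z. -/
theorem stmt_5 (z τ g : ℝ) (hz : 0 < z) (hτ : 0 < τ) (hg : 0 < g)
    (hcubic : g ^ 3 + 2 * g ^ 2 + (1 + τ / z - 1 / z) * g - 1 / z = 0) :
    -Real.log ((1 + g) ^ 2 - τ * g ^ 2 - τ * g ^ 2 * (1 / (1 + g)) ^ 2
        - g ^ 2 * (1 - τ * g ^ 2 * (1 / (1 + g)) ^ 2))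
      - Real.log ((1 / (1 + g)) ^ 2) =
    Real.log ((1 / z) * (1 + g) ^ 2) - Real.log (1 / z + 2 * g ^ 3 + 2 * g ^ 2) :=
  stmt_5_general z τ g hz hg hcubic
end

section
/- Let τ ∈ (0,1) be fixed. As ρ → ∞, the unique positive root g(ρ) of g³ + 2g² + (1 + ρτ − ρ)g − ρ = 0 satisfies g(ρ) = √((1−τ)ρ) + (1/(2(1−τ)) − 1) + o(1). -/
private lemma quad_pos (A B C : ℝ) (hA : 0 < A) :
    ∃ S : ℝ, 1 ≤ S ∧ ∀ s : ℝ, S ≤ s → 0 < A * s ^ 2 + B * s + C := by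
  refine ⟨max 1 ((|B| + |C| + 1) / A), le_max_left _ _, fun s hs => ?_⟩
  have h1 : 1 ≤ s := le_trans (le_max_left _ _) hs
  have h2 : (|B| + |C| + 1) / A ≤ s := le_trans (le_max_right _ _) hs
  have h3 : |B| + |C| + 1 ≤ A * s := by
    rw [div_le_iff₀ hA] at h2; linarith
  nlinarith [mul_nonneg (abs_nonneg C) (by linarith : (0:ℝ) ≤ s - 1),
    mul_nonneg (sub_nonneg.2 h3) (by linarith : (0:ℝ) ≤ s),
    mul_nonneg (by linarith [neg_abs_le B] : (0:ℝ) ≤ B + |B|) (by linarith : (0:ℝ) ≤ s),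
    neg_abs_le C]

private lemma mono_lt {a x y : ℝ} (ha : 0 < a) (hx : 0 < x) (hxy : x < y) :
    (x * (x + 1) ^ 2) * (a * y + 1) < (y * (y + 1) ^ 2) * (a * x + 1) := by
  have hy : 0 < y := hx.trans hxy
  have h : 0 < y - x := sub_pos.2 hxy
  nlinarith [mul_pos hx hy, mul_pos (mul_pos hx hy) h, mul_pos ha (mul_pos (mul_pos hx hy) h),
    mul_pos h hx, mul_pos h hy, mul_pos (mul_pos h hx) hy,
    mul_pos ha (mul_pos (mul_pos (mul_pos hx hy) h) (add_pos hx hy))]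

private lemma root_lower {a ρ b G : ℝ} (ha : 0 < a) (hρ : 0 < ρ) (hb : 0 < b)
    (hG : 0 < G) (heq : G * (G + 1) ^ 2 = ρ * (a * G + 1))
    (hlt : b * (b + 1) ^ 2 < ρ * (a * b + 1)) : b < G := by
  by_contra h
  push_neg at h
  rcases eq_or_lt_of_le h with he | hl
  · rw [← he, heq] at hlt; exact lt_irrefl _ hlt
  · have hm := mono_lt ha hG hl
    rw [heq] at hm
    have hG1 : 0 < a * G + 1 := by positivity
    have hb1 : 0 < a * b + 1 := by positivity
    nlinarith [mul_lt_mul_of_pos_right hlt hG1]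

private lemma root_upper {a ρ b G : ℝ} (ha : 0 < a) (hρ : 0 < ρ) (hb : 0 < b)
    (hG : 0 < G) (heq : G * (G + 1) ^ 2 = ρ * (a * G + 1))
    (hlt : ρ * (a * b + 1) < b * (b + 1) ^ 2) : G < b := by
  by_contra h
  push_neg at h
  rcases eq_or_lt_of_le h with he | hl
  · rw [he, heq] at hlt; exact lt_irrefl _ hlt
  · have hm := mono_lt ha hb hl
    rw [heq] at hm
    have hG1 : 0 < a * G + 1 := by positivity
    have hb1 : 0 < a * b + 1 := by positivity
    nlinarith [mul_lt_mul_of_pos_right hlt hG1]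

private lemma pos_of_mul_pos' {a x : ℝ} (ha : 0 < a) (h : 0 < a * x) : 0 < x := by
  by_contra h'
  push_neg at h'
  nlinarith

set_option maxHeartbeats 1000000 in
/-- Let τ ∈ (0,1) be fixed. As ρ → ∞, the unique positive root g(ρ) of
g³ + 2g² + (1 + ρτ − ρ)g − ρ = 0 satisfies g(ρ) = √((1−τ)ρ) + (1/(2(1−τ)) − 1) + o(1). -/
theorem stmt_6 (τ : ℝ) (hτ : τ ∈ Set.Ioo (0 : ℝ) 1) (g : ℝ → ℝ)
    (hg : ∀ ρ > (0 : ℝ), 0 < g ρ ∧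
      (g ρ) ^ 3 + 2 * (g ρ) ^ 2 + (1 + ρ * τ - ρ) * g ρ - ρ = 0) :
    Filter.Tendsto (fun ρ : ℝ => g ρ - Real.sqrt ((1 - τ) * ρ) - (1 / (2 * (1 - τ)) - 1))
      Filter.atTop (nhds 0) := by
  obtain ⟨hτ0, hτ1⟩ := hτ
  have ha : (0:ℝ) < 1 - τ := by linarith
  set a : ℝ := 1 - τ with ha_def
  have ha' : a ≠ 0 := ne_of_gt ha
  set c : ℝ := 1 / (2 * a) - 1 with hc_def
  rw [Metric.tendsto_atTop]
  intro ε hε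
  obtain ⟨S₁, hS₁1, hS₁⟩ := quad_pos (2*a*ε)
    (-(3*a*(c-ε)^2 + 4*a*(c-ε) + a)) (-(a*(c-ε)^3 + 2*a*(c-ε)^2 + a*(c-ε))) (by positivity)
  obtain ⟨S₂, hS₂1, hS₂⟩ := quad_pos (2*a*ε)
    (3*a*(c+ε)^2 + 4*a*(c+ε) + a) (a*(c+ε)^3 + 2*a*(c+ε)^2 + a*(c+ε)) (by positivity)
  set S : ℝ := max (max S₁ S₂) (1 + |c| + ε) with hS_def
  have hS0 : 0 < S := lt_of_lt_of_le (by positivity) (le_max_right _ _)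
  refine ⟨max 1 (S^2 / a), fun ρ hρR => ?_⟩
  have hρ1 : (1:ℝ) ≤ ρ := le_trans (le_max_left _ _) hρR
  have hρ0 : (0:ℝ) < ρ := by linarith
  set s : ℝ := Real.sqrt (a * ρ) with hs_def
  have hs2 : s ^ 2 = a * ρ := Real.sq_sqrt (by positivity)
  have hsS : S ≤ s := by
    have h1 : S ^ 2 / a ≤ ρ := le_trans (le_max_right _ _) hρR
    have h2 : S ^ 2 ≤ a * ρ := by
      rw [div_le_iff₀ ha] at h1; linarith
    calc S = Real.sqrt (S ^ 2) := (Real.sqrt_sq hS0.le).symm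
      _ ≤ s := Real.sqrt_le_sqrt h2
  have hsc : 1 + |c| + ε ≤ s := le_trans (le_max_right _ _) hsS
  have habsc : -|c| ≤ c := neg_abs_le c
  have habsc' : c ≤ |c| := le_abs_self c
  -- the cubic equation in product form
  obtain ⟨hgpos, heqn⟩ := hg ρ hρ0
  have heq : g ρ * (g ρ + 1) ^ 2 = ρ * (a * g ρ + 1) := by
    rw [ha_def]; linear_combination heqn
  -- relation for a * d
  have had1 : a * (c - ε) = 1/2 - a - a * ε := by
    rw [hc_def]; field_simp
  have had2 : a * (c + ε) = 1/2 - a + a * ε := by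
    rw [hc_def]; field_simp
  -- lower bound
  have hb1pos : 0 < s + (c - ε) := by linarith
  have hkey1 : a * (ρ * (a * (s + (c - ε)) + 1) - (s + (c - ε)) * ((s + (c - ε)) + 1) ^ 2)
      = 2*a*ε * s ^ 2 + (-(3*a*(c-ε)^2 + 4*a*(c-ε) + a)) * s
        + (-(a*(c-ε)^3 + 2*a*(c-ε)^2 + a*(c-ε))) := by
    linear_combination (a * (s + (c - ε)) + 1) * hs2.symm + (-2 * s ^ 2) * had1
  have hQ1 : 0 < 2*a*ε * s ^ 2 + (-(3*a*(c-ε)^2 + 4*a*(c-ε) + a)) * s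
      + (-(a*(c-ε)^3 + 2*a*(c-ε)^2 + a*(c-ε))) :=
    hS₁ s (le_trans (le_trans (le_max_left _ _) (le_max_left _ _)) hsS)
  have hlt1 : (s + (c - ε)) * ((s + (c - ε)) + 1) ^ 2 < ρ * (a * (s + (c - ε)) + 1) := by
    have h0 := pos_of_mul_pos' ha (hkey1 ▸ hQ1)
    linarith
  have hlow : s + (c - ε) < g ρ := root_lower ha hρ0 hb1pos hgpos heq hlt1
  -- upper bound
  have hb2pos : 0 < s + (c + ε) := by linarith
  have hkey2 : a * ((s + (c + ε)) * ((s + (c + ε)) + 1) ^ 2 - ρ * (a * (s + (c + ε)) + 1))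
      = 2*a*ε * s ^ 2 + (3*a*(c+ε)^2 + 4*a*(c+ε) + a) * s
        + (a*(c+ε)^3 + 2*a*(c+ε)^2 + a*(c+ε)) := by
    linear_combination (-(a * (s + (c + ε)) + 1)) * hs2.symm + (2 * s ^ 2) * had2
  have hQ2 : 0 < 2*a*ε * s ^ 2 + (3*a*(c+ε)^2 + 4*a*(c+ε) + a) * s
      + (a*(c+ε)^3 + 2*a*(c+ε)^2 + a*(c+ε)) :=
    hS₂ s (le_trans (le_trans (le_max_right _ _) (le_max_left _ _)) hsS)
  have hlt2 : ρ * (a * (s + (c + ε)) + 1) < (s + (c + ε)) * ((s + (c + ε)) + 1) ^ 2 := by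
    have h0 := pos_of_mul_pos' ha (hkey2 ▸ hQ2)
    linarith
  have hupp : g ρ < s + (c + ε) := root_upper ha hρ0 hb2pos hgpos heq hlt2
  -- conclude
  simp only [Real.dist_eq, sub_zero]
  rw [abs_lt]
  constructor <;> linarith
end

section
/- Let T, S be positive semidefinite Hermitian matrices of sizes M×M and L×L with largest eigenvalues t_max, s_max, and z > 0. Define f(ḡ) = (1/M)Tr T(I + gT)⁻¹ where g = (1/M)Tr S(zI + ḡS)⁻¹. Then any fixed point ḡ = f(ḡ) with ḡ > 0 satisfies Tr T / (M(1 + L s_max t_max/(Mz))) < ḡ < t_max, provided Tr T > 0 and Tr S > 0. -/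
open Matrix in
lemma trace_aux {n : ℕ} (A : Matrix (Fin n) (Fin n) ℝ) (hA : A.IsHermitian) (c d : ℝ)
    (h : ∀ i, c + d * hA.eigenvalues i ≠ 0) :
    (A * (c • (1 : Matrix (Fin n) (Fin n) ℝ) + d • A)⁻¹).trace
      = ∑ i, hA.eigenvalues i / (c + d * hA.eigenvalues i) := by
  set U : Matrix (Fin n) (Fin n) ℝ := (hA.eigenvectorUnitary : Matrix (Fin n) (Fin n) ℝ) with hUdef
  have hU1 : U * star U = 1 := (Matrix.mem_unitaryGroup_iff).mp hA.eigenvectorUnitary.2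
  have hU2 : star U * U = 1 := (Matrix.mem_unitaryGroup_iff').mp hA.eigenvectorUnitary.2
  have hspec : A = U * diagonal hA.eigenvalues * star U := by
    have := hA.spectral_theorem
    simpa using this
  set w : Fin n → ℝ := fun i => c + d * hA.eigenvalues i with hw
  have hB : c • (1 : Matrix (Fin n) (Fin n) ℝ) + d • A = U * diagonal w * star U := by
    rw [hspec]
    rw [show diagonal w = c • (1 : Matrix (Fin n) (Fin n) ℝ) + d • diagonal hA.eigenvalues by
      ext i j
      rcases eq_or_ne i j with rfl | hij
      · simp [diagonal, hw]
      · simp [diagonal, hij]]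
    simp only [Matrix.add_mul, Matrix.mul_add, Matrix.smul_mul, Matrix.mul_smul, Matrix.mul_one,
      Matrix.one_mul, hU1]
  have hinv : (c • (1 : Matrix (Fin n) (Fin n) ℝ) + d • A)⁻¹
      = U * diagonal (fun i => (w i)⁻¹) * star U := by
    apply Matrix.inv_eq_right_inv
    rw [hB]
    calc U * diagonal w * star U * (U * diagonal (fun i => (w i)⁻¹) * star U)
        = U * (diagonal w * (star U * U) * diagonal (fun i => (w i)⁻¹)) * star U := by
          simp only [Matrix.mul_assoc]
      _ = 1 := by
          rw [hU2, Matrix.mul_one, diagonal_mul_diagonal]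
          rw [show (fun i => w i * (w i)⁻¹) = fun _ => (1:ℝ) from funext fun i => mul_inv_cancel₀ (h i)]
          rw [diagonal_one, Matrix.mul_one, hU1]
  rw [hinv]
  conv_lhs => rw [hspec]
  calc (U * diagonal hA.eigenvalues * star U * (U * diagonal (fun i => (w i)⁻¹) * star U)).trace
      = (U * (diagonal hA.eigenvalues * diagonal (fun i => (w i)⁻¹)) * star U).trace := by
        rw [show U * diagonal hA.eigenvalues * star U * (U * diagonal (fun i => (w i)⁻¹) * star U)
            = U * (diagonal hA.eigenvalues * ((star U * U) * diagonal (fun i => (w i)⁻¹))) * star U by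
          simp only [Matrix.mul_assoc], hU2, Matrix.one_mul]
    _ = (diagonal hA.eigenvalues * diagonal (fun i => (w i)⁻¹)).trace := by
        rw [Matrix.trace_mul_cycle, ← Matrix.mul_assoc, hU2, Matrix.one_mul]
    _ = ∑ i, hA.eigenvalues i / (c + d * hA.eigenvalues i) := by
        rw [diagonal_mul_diagonal, Matrix.trace_diagonal]
        exact Finset.sum_congr rfl fun i _ => (div_eq_mul_inv _ _).symm

open Matrix in
lemma trace_eq_sum_eig {n : ℕ} (A : Matrix (Fin n) (Fin n) ℝ) (hA : A.IsHermitian) :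
    A.trace = ∑ i, hA.eigenvalues i := by
  set U : Matrix (Fin n) (Fin n) ℝ := (hA.eigenvectorUnitary : Matrix (Fin n) (Fin n) ℝ)
  have hU2 : star U * U = 1 := (Matrix.mem_unitaryGroup_iff').mp hA.eigenvectorUnitary.2
  have hspec : A = U * diagonal hA.eigenvalues * star U := by
    have := hA.spectral_theorem
    simpa using this
  conv_lhs => rw [hspec]
  rw [Matrix.trace_mul_cycle, hU2, Matrix.one_mul, Matrix.trace_diagonal]



/-- A priori bounds on a positive fixed point ḡ = f(ḡ) of the canonical system, where
f(ḡ) = (1/M)Tr T(I + gT)⁻¹ with g = (1/M)Tr S(zI + ḡS)⁻¹, and t_max, s_max are the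
largest eigenvalues of the positive semidefinite matrices T and S:
Tr T / (M(1 + L s_max t_max/(Mz))) < ḡ < t_max. -/
theorem stmt_11 (M L : ℕ) (hM : 0 < M) (hL : 0 < L) (z : ℝ) (hz : 0 < z)
    (T : Matrix (Fin M) (Fin M) ℝ) (S : Matrix (Fin L) (Fin L) ℝ)
    (hT : T.PosSemidef) (hS : S.PosSemidef)
    (tmax smax : ℝ)
    (htmax : ∀ i, hT.1.eigenvalues i ≤ tmax) (htmax' : ∃ i, hT.1.eigenvalues i = tmax)
    (hsmax : ∀ j, hS.1.eigenvalues j ≤ smax) (hsmax' : ∃ j, hS.1.eigenvalues j = smax)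
    (hTrT : 0 < T.trace) (hTrS : 0 < S.trace)
    (gbar : ℝ) (hgbar : 0 < gbar)
    (hfix : gbar = (1 / (M : ℝ)) *
      (T * (1 + ((1 / (M : ℝ)) *
        (S * (z • (1 : Matrix (Fin L) (Fin L) ℝ) + gbar • S)⁻¹).trace) • T)⁻¹).trace) :
    T.trace / (M * (1 + L * smax * tmax / (M * z))) < gbar ∧ gbar < tmax := by
  have hMR : (0:ℝ) < (M:ℝ) := Nat.cast_pos.mpr hM
  have hLR : (0:ℝ) < (L:ℝ) := Nat.cast_pos.mpr hL
  set t : Fin M → ℝ := hT.1.eigenvalues with htdef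
  set s : Fin L → ℝ := hS.1.eigenvalues with hsdef
  have ht0 : ∀ i, 0 ≤ t i := fun i => hT.eigenvalues_nonneg i
  have hs0 : ∀ j, 0 ≤ s j := fun j => hS.eigenvalues_nonneg j
  have hTsum : T.trace = ∑ i, t i := trace_eq_sum_eig T hT.1
  have hSsum : S.trace = ∑ j, s j := trace_eq_sum_eig S hS.1
  have hex_t : ∃ i, 0 < t i := by
    by_contra hcon
    push_neg at hcon
    have : ∑ i, t i = 0 :=
      Finset.sum_eq_zero fun i _ => le_antisymm (hcon i) (ht0 i)
    rw [hTsum, this] at hTrT; exact lt_irrefl 0 hTrT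
  have hex_s : ∃ j, 0 < s j := by
    by_contra hcon
    push_neg at hcon
    have : ∑ j, s j = 0 :=
      Finset.sum_eq_zero fun j _ => le_antisymm (hcon j) (hs0 j)
    rw [hSsum, this] at hTrS; exact lt_irrefl 0 hTrS
  obtain ⟨i1, hi1⟩ := hex_t
  obtain ⟨j1, hj1⟩ := hex_s
  have htmax0 : 0 < tmax := lt_of_lt_of_le hi1 (htmax i1)
  have hsmax0 : 0 < smax := lt_of_lt_of_le hj1 (hsmax j1)
  have hden_s : ∀ j, (0:ℝ) < z + gbar * s j := fun j =>
    lt_of_lt_of_le hz (by nlinarith [hs0 j])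
  have hgS : (S * (z • (1 : Matrix (Fin L) (Fin L) ℝ) + gbar • S)⁻¹).trace
      = ∑ j, s j / (z + gbar * s j) :=
    trace_aux S hS.1 z gbar (fun j => (hden_s j).ne')
  set g : ℝ := (1 / (M : ℝ)) * (S * (z • (1 : Matrix (Fin L) (Fin L) ℝ) + gbar • S)⁻¹).trace
    with hgdef
  have hg_eq : g = (1 / (M : ℝ)) * ∑ j, s j / (z + gbar * s j) := by rw [hgdef, hgS]
  have hg_pos : 0 < g := by
    rw [hg_eq]
    apply mul_pos (by positivity)
    apply Finset.sum_pos' (fun j _ => div_nonneg (hs0 j) (hden_s j).le)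
    exact ⟨j1, Finset.mem_univ _, div_pos hj1 (hden_s j1)⟩
  set C : ℝ := (L:ℝ) * smax / ((M:ℝ) * z) with hCdef
  have hg_lt : g < C := by
    have hsum_lt : ∑ j, s j / (z + gbar * s j) < ∑ _j : Fin L, smax / z := by
      obtain ⟨j0, hj0⟩ := hsmax'
      apply Finset.sum_lt_sum
      · intro j _
        exact div_le_div₀ hsmax0.le (hsmax j) hz (by nlinarith [hs0 j])
      · refine ⟨j0, Finset.mem_univ _, ?_⟩
        have hs0j : 0 < s j0 := hj0 ▸ hsmax0
        calc s j0 / (z + gbar * s j0) < s j0 / z := by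
              apply div_lt_div_of_pos_left hs0j hz
              nlinarith
          _ = smax / z := by rw [hj0]
    rw [Finset.sum_const, Finset.card_univ, Fintype.card_fin, nsmul_eq_mul] at hsum_lt
    rw [hg_eq, hCdef]
    calc (1 / (M:ℝ)) * ∑ j, s j / (z + gbar * s j)
        < (1 / (M:ℝ)) * ((L:ℝ) * (smax / z)) :=
          mul_lt_mul_of_pos_left hsum_lt (by positivity)
      _ = (L:ℝ) * smax / ((M:ℝ) * z) := by rw [mul_comm ((M:ℝ)) z, ← div_div]; ring
  have hden_t : ∀ i, (0:ℝ) < 1 + g * t i := fun i =>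
    lt_of_lt_of_le one_pos (by nlinarith [ht0 i, hg_pos.le])
  have hfix' : gbar = (1 / (M : ℝ)) * ∑ i, t i / (1 + g * t i) := by
    rw [hfix]
    congr 1
    rw [← trace_aux T hT.1 1 g (fun i => (hden_t i).ne')]
    congr 3
    rw [one_smul]
  clear_value g t s
  clear hfix hgdef hgS hTrT hTrS
  constructor
  · -- lower bound
    have hCpos : 0 < C := by rw [hCdef]; positivity
    have hD : (0:ℝ) < 1 + C * tmax := by positivity
    have hsum_gt : ∑ i, t i / (1 + C * tmax) < ∑ i, t i / (1 + g * t i) := by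
      obtain ⟨i0, hi0⟩ := htmax'
      apply Finset.sum_lt_sum
      · intro i _
        apply div_le_div_of_nonneg_left (ht0 i) (hden_t i)
        have : g * t i ≤ C * tmax := by nlinarith [ht0 i, htmax i, hg_pos.le]
        linarith
      · refine ⟨i0, Finset.mem_univ _, ?_⟩
        have hti0 : 0 < t i0 := hi0 ▸ htmax0
        apply div_lt_div_of_pos_left hti0 (hden_t i0)
        have : g * t i0 < C * tmax := by nlinarith [hg_pos.le]
        linarith
    have hCt : (L:ℝ) * smax * tmax / ((M:ℝ) * z) = C * tmax := by
      rw [hCdef, div_mul_eq_mul_div]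
    rw [hTsum, hCt]
    calc (∑ i, t i) / ((M:ℝ) * (1 + C * tmax))
        = (1 / (M:ℝ)) * ∑ i, t i / (1 + C * tmax) := by
          rw [← Finset.sum_div]
          rw [one_div, div_eq_mul_inv, mul_inv, div_eq_mul_inv]
          ring
      _ < (1 / (M:ℝ)) * ∑ i, t i / (1 + g * t i) := by
          exact mul_lt_mul_of_pos_left hsum_gt (by positivity)
      _ = gbar := hfix'.symm
  · -- upper bound
    have hsum_lt : ∑ i, t i / (1 + g * t i) < ∑ _i : Fin M, tmax := by
      apply Finset.sum_lt_sum_of_nonempty ⟨i1, Finset.mem_univ _⟩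
      intro i _
      rcases eq_or_lt_of_le (ht0 i) with h0 | hpos
      · rw [← h0]; simpa using htmax0
      · calc t i / (1 + g * t i) < t i / 1 := by
              apply div_lt_div_of_pos_left hpos one_pos
              nlinarith
          _ = t i := div_one _
          _ ≤ tmax := htmax i
    rw [Finset.sum_const, Finset.card_univ, Fintype.card_fin, nsmul_eq_mul] at hsum_lt
    rw [hfix']
    calc (1 / (M:ℝ)) * ∑ i, t i / (1 + g * t i)
        < (1 / (M:ℝ)) * ((M:ℝ) * tmax) := mul_lt_mul_of_pos_left hsum_lt (by positivity)
      _ = tmax := by rw [one_div, inv_mul_cancel_left₀ hMR.ne']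
end
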